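/- The second derivative of SiLU(x) = x·e^x/(1+e^x) is bounded: |SiLU''(x)| ≤ 1/2 for all real x. -/

import Mathlib

noncomputable section
open Real

def SiLU (x : ℝ) : ℝ := x * Real.exp x / (1 + Real.exp x)

/-!
With `σ` the sigmoid, `SiLU x = x * σ x` and `σ' = σ (1 - σ)`, so
`SiLU'' = σ (1 - σ) (2 + x (1 - 2σ))`. Since `x (1 - 2σ x) ≤ 0` and `σ (1 - σ) ≤ 1/4`, this is at
most `1/2`. It is also even, and for `x ≥ 0` its negative part `σ (1 - σ) x (2σ - 1)` is at most
`x (1 - σ x) = x / (1 + exp x) ≤ 1/2`, because `2x ≤ exp x`.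
-/

lemma SiLU_eq_mul_sigmoid : SiLU = fun x => x * sigmoid x := by
  ext x
  rw [SiLU, sigmoid_def, exp_neg]
  field_simp
  ring

lemma deriv_SiLU : deriv SiLU = fun x => sigmoid x + x * (sigmoid x * (1 - sigmoid x)) := by
  ext x
  rw [SiLU_eq_mul_sigmoid]
  exact ((hasDerivAt_id' x).mul (hasDerivAt_sigmoid x)).deriv.trans (by rw [one_mul])

lemma deriv_deriv_SiLU (x : ℝ) :
    deriv (deriv SiLU) x = sigmoid x * (1 - sigmoid x) * (2 + x * (1 - 2 * sigmoid x)) := by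
  rw [deriv_SiLU]
  have hσ := hasDerivAt_sigmoid x
  refine (hσ.add ((hasDerivAt_id x).mul (hσ.mul (hσ.const_sub 1)))).deriv.trans ?_
  simp only [id, Pi.mul_apply]
  ring

lemma mul_one_sub_two_mul_sigmoid_nonpos (x : ℝ) : x * (1 - 2 * sigmoid x) ≤ 0 := by
  rcases le_total 0 x with hx | hx
  · have h := sigmoid_le hx
    rw [sigmoid_zero] at h
    nlinarith
  · have h := sigmoid_le hx
    rw [sigmoid_zero] at h
    nlinarith

lemma sigmoid_mul_one_sub_sigmoid_le (x : ℝ) : sigmoid x * (1 - sigmoid x) ≤ 1 / 4 := by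
  nlinarith [sq_nonneg (2 * sigmoid x - 1)]

lemma sigmoid_mul_one_sub_sigmoid_nonneg (x : ℝ) : 0 ≤ sigmoid x * (1 - sigmoid x) :=
  mul_nonneg (sigmoid_nonneg x) (sub_nonneg.2 (sigmoid_le_one x))

lemma mul_one_sub_sigmoid_le_half (x : ℝ) : x * (1 - sigmoid x) ≤ 1 / 2 := by
  rw [← sigmoid_neg, sigmoid_def, neg_neg, ← div_eq_mul_inv, div_le_iff₀ (by positivity)]
  linarith [two_mul_le_exp (x := x)]

lemma deriv_deriv_SiLU_le_half (x : ℝ) : deriv (deriv SiLU) x ≤ 1 / 2 := by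
  rw [deriv_deriv_SiLU]
  nlinarith [sigmoid_mul_one_sub_sigmoid_le x, mul_nonneg (sigmoid_mul_one_sub_sigmoid_nonneg x)
    (neg_nonneg.2 (mul_one_sub_two_mul_sigmoid_nonpos x))]

lemma deriv_deriv_SiLU_neg (x : ℝ) : deriv (deriv SiLU) (-x) = deriv (deriv SiLU) x := by
  rw [deriv_deriv_SiLU, deriv_deriv_SiLU, sigmoid_neg]
  ring

lemma neg_half_le_deriv_deriv_SiLU_of_nonneg {x : ℝ} (hx : 0 ≤ x) :
    -(1 / 2) ≤ deriv (deriv SiLU) x := by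
  rw [deriv_deriv_SiLU]
  have h1 := sigmoid_le_one x
  have ha : 0 ≤ x * (1 - sigmoid x) := mul_nonneg hx (sub_nonneg.2 h1)
  have hb : sigmoid x * (2 * sigmoid x - 1) ≤ 1 := by nlinarith [sigmoid_nonneg x]
  nlinarith [mul_le_mul_of_nonneg_left hb ha, mul_one_sub_sigmoid_le_half x,
    sigmoid_mul_one_sub_sigmoid_nonneg x]

lemma neg_half_le_deriv_deriv_SiLU (x : ℝ) : -(1 / 2) ≤ deriv (deriv SiLU) x := by
  rcases le_total 0 x with hx | hx
  · exact neg_half_le_deriv_deriv_SiLU_of_nonneg hx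
  · rw [← deriv_deriv_SiLU_neg]
    exact neg_half_le_deriv_deriv_SiLU_of_nonneg (neg_nonneg.2 hx)

theorem silu_second_deriv_bound (x : ℝ) : |deriv (deriv SiLU) x| ≤ 1 / 2 :=
  abs_le.2 ⟨neg_half_le_deriv_deriv_SiLU x, deriv_deriv_SiLU_le_half x⟩
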